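/- arXiv:math/0407111 — 6 statements merged into one kernel-verified Lean document; each statement's English description precedes it below -/
import Mathlib

section
/- E_0 is not smooth: there is no Borel function f : 2^ℕ → ℝ such that for all A, B ∈ 2^ℕ, A E_0 B iff f(A) = f(B). -/
/-- `E₀`: eventual agreement on Cantor space `2^ℕ`. -/
def E0 (A B : ℕ → Bool) : Prop := ∃ n : ℕ, ∀ k : ℕ, n ≤ k → A k = B k

namespace E0Aux

open Filter Set Topology

local notation "X" => ℕ → Bool

/-- Flip map: XOR with a fixed mask. -/
def flip (m : X) : X → X := fun x i => xor (m i) (x i)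

lemma flip_flip (m x : X) : flip m (flip m x) = x := by
  funext i
  simp [flip]

lemma flip_continuous (m : X) : Continuous (flip m) :=
  continuous_pi fun i =>
    (continuous_of_discreteTopology (f := fun b : Bool => xor (m i) b)).comp
      (continuous_apply i)

/-- The flip map as a homeomorphism. -/
def flipH (m : X) : (ℕ → Bool) ≃ₜ (ℕ → Bool) where
  toFun := flip m
  invFun := flip m
  left_inv := flip_flip m
  right_inv := flip_flip m
  continuous_toFun := flip_continuous m
  continuous_invFun := flip_continuous m

lemma E0_flip (m x : X) (n : ℕ) (hm : ∀ i, n ≤ i → m i = false) :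
    E0 x (flip m x) := by
  refine ⟨n, fun k hk => ?_⟩
  simp [flip, hm k hk]

/-- Cylinders are contained in open sets containing their base point, for suitable length. -/
lemma cylinder_subset {U : Set X} (hU : IsOpen U) {x : X} (hx : x ∈ U) :
    ∃ n : ℕ, {y : X | ∀ i < n, y i = x i} ⊆ U := by
  obtain ⟨I, u, hu, hIU⟩ := isOpen_pi_iff.mp hU x hx
  refine ⟨I.sup id + 1, fun y hy => hIU ?_⟩
  intro i hi
  have hlt : i < I.sup id + 1 := Nat.lt_succ_of_le (Finset.le_sup (f := id) hi)
  rw [hy i hlt]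
  exact (hu i hi).2

/-- Complements of singletons are dense in Cantor space. -/
lemma dense_compl_singleton (x : X) : Dense ({x}ᶜ : Set X) := by
  intro y
  rw [mem_closure_iff]
  intro U hUo hyU
  obtain ⟨n, hn⟩ := cylinder_subset hUo hyU
  rcases eq_or_ne y x with rfl | hne
  · refine ⟨fun i => if i = n then !(y i) else y i, hn fun i hi => ?_, ?_⟩
    · have : i ≠ n := Nat.ne_of_lt hi
      simp [this]
    · intro h
      have := congrFun (Set.mem_singleton_iff.mp h) n
      simp at this
  · exact ⟨y, hyU, hne⟩

/-- Countable sets are meager in Cantor space. -/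
lemma countable_isMeagre {K : Set X} (hK : K.Countable) : IsMeagre K := by
  have : Kᶜ = ⋂ x ∈ K, ({x}ᶜ : Set X) := by
    ext y
    simp only [Set.mem_compl_iff, Set.mem_iInter]
    exact ⟨fun h x hx hyx => h (hyx ▸ hx), fun h hy => h y hy rfl⟩
  rw [IsMeagre, this]
  exact (countable_bInter_mem hK).mpr fun x _ =>
    residual_of_dense_open isClosed_singleton.isOpen_compl (dense_compl_singleton x)

/-- Topological zero-one law for `E0`-invariant Borel sets. -/
lemma zero_one {S : Set X} (hm : MeasurableSet S)
    (hinv : ∀ A B : X, E0 A B → A ∈ S → B ∈ S) :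
    S ∈ residual (ℕ → Bool) ∨ IsMeagre S := by
  obtain ⟨U, hUo, hSU⟩ := hm.residualEq_isOpen
  rcases eq_empty_or_nonempty U with rfl | ⟨x, hx⟩
  · right
    rw [IsMeagre]
    refine Filter.mem_of_superset hSU fun y hy => ?_
    simp only [Set.mem_compl_iff]
    intro hyS
    have : (y ∈ S) = (y ∈ (∅ : Set X)) := hy
    rw [this] at hyS
    exact hyS
  · left
    obtain ⟨n, hn⟩ := cylinder_subset hUo hx
    -- the cylinder minus S is meager
    have hUS : IsMeagre (U \ S) := by
      rw [IsMeagre]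
      refine Filter.mem_of_superset hSU fun y hy => ?_
      simp only [Set.mem_compl_iff, Set.mem_diff]
      rintro ⟨hyU, hyS⟩
      have : (y ∈ S) = (y ∈ U) := hy
      rw [this] at hyS
      exact hyS hyU
    have hcylS : IsMeagre ({y : X | ∀ i < n, y i = x i} \ S) :=
      hUS.mono (Set.diff_subset_diff_left hn)
    -- masks
    have key : Sᶜ ⊆ ⋃ t : Fin n → Bool,
        (flip (fun i => if h : i < n then t ⟨i, h⟩ else false)) ⁻¹'
          ({y : X | ∀ i < n, y i = x i} \ S) := by
      intro y hy
      refine Set.mem_iUnion.mpr ⟨fun i => xor (x i) (y i), ?_, ?_⟩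
      · intro i hi
        simp [flip, hi, Bool.xor_assoc]
      · intro hmem
        apply hy
        refine hinv _ _ ?_ hmem
        have hE : E0 y (flip (fun i => if h : i < n then
            (fun j : Fin n => xor (x j) (y j)) ⟨i, h⟩ else false) y) :=
          E0_flip _ y n (fun i hi => by simp [Nat.not_lt_of_le hi])
        obtain ⟨N, hN⟩ := hE
        exact ⟨N, fun k hk => (hN k hk).symm⟩
    have hmeag : IsMeagre (⋃ t : Fin n → Bool,
        (flip (fun i => if h : i < n then t ⟨i, h⟩ else false)) ⁻¹'
          ({y : X | ∀ i < n, y i = x i} \ S)) := by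
      rw [IsMeagre, Set.compl_iUnion]
      refine (countable_iInter_mem).mpr fun t => ?_
      exact hcylS.preimage_of_isOpenMap (flip_continuous _) (flipH _).isOpenMap
    have : IsMeagre Sᶜ := hmeag.mono key
    rw [IsMeagre, compl_compl] at this
    exact this

end E0Aux

/-- `E₀` is not smooth: no Borel(-measurable) function `f : 2^ℕ → ℝ` reduces `E₀`
to equality on `ℝ`. -/
theorem E0_not_smooth :
    ¬ ∃ f : (ℕ → Bool) → ℝ, Measurable f ∧ ∀ A B : ℕ → Bool, E0 A B ↔ f A = f B := by
  open Filter Set E0Aux in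
  rintro ⟨f, hf, hred⟩
  -- all preimages are invariant, so they satisfy the zero-one law
  have h01 : ∀ V : Set ℝ, MeasurableSet V →
      f ⁻¹' V ∈ residual (ℕ → Bool) ∨ IsMeagre (f ⁻¹' V) := by
    intro V hV
    refine zero_one (hf hV) fun A B hAB hA => ?_
    have : f A = f B := (hred A B).mp hAB
    simpa [Set.mem_preimage, ← this] using hA
  set T : Set ℝ := {r : ℝ | f ⁻¹' (Set.Iic r) ∈ residual (ℕ → Bool)} with hT
  have hne_empty : (∅ : Set (ℕ → Bool)) ∉ residual (ℕ → Bool) := by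
    intro h
    exact Set.not_nonempty_empty (dense_of_mem_residual h).nonempty
  have hmono : ∀ r r' : ℝ, r ≤ r' → r ∈ T → r' ∈ T := by
    intro r r' hrr' hr
    have hr' : f ⁻¹' (Set.Iic r) ∈ residual (ℕ → Bool) := hr
    exact Filter.mem_of_superset hr' (Set.preimage_mono (Set.Iic_subset_Iic.mpr hrr'))
  have hTne : T.Nonempty := by
    by_contra h
    rw [Set.not_nonempty_iff_eq_empty] at h
    have hall : ∀ n : ℕ, IsMeagre (f ⁻¹' (Set.Iic (n : ℝ))) := by
      intro n
      rcases h01 (Set.Iic (n : ℝ)) measurableSet_Iic with hc | hm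
      · exact absurd (by rwa [hT]) (by simp [h] : (n : ℝ) ∉ T)
      · exact hm
    have huniv : (Set.univ : Set (ℕ → Bool)) = ⋃ n : ℕ, f ⁻¹' (Set.Iic (n : ℝ)) := by
      ext x
      simp only [Set.mem_univ, Set.mem_iUnion, Set.mem_preimage, Set.mem_Iic, true_iff]
      exact exists_nat_ge (f x)
    have : IsMeagre (Set.univ : Set (ℕ → Bool)) := by
      rw [huniv]; exact isMeagre_iUnion hall
    rw [IsMeagre, Set.compl_univ] at this
    exact hne_empty this
  have hTbdd : BddBelow T := by
    by_contra h
    have hall : ∀ n : ℕ, (-(n : ℝ)) ∈ T := by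
      intro n
      rw [not_bddBelow_iff] at h
      obtain ⟨r, hr, hlt⟩ := h (-(n : ℝ))
      exact hmono r _ hlt.le hr
    have : (⋂ n : ℕ, f ⁻¹' (Set.Iic (-(n : ℝ)))) ∈ residual (ℕ → Bool) :=
      (countable_iInter_mem).mpr hall
    have hempty : (⋂ n : ℕ, f ⁻¹' (Set.Iic (-(n : ℝ)))) = ∅ := by
      ext x
      simp only [Set.mem_iInter, Set.mem_preimage, Set.mem_Iic, Set.mem_empty_iff_false,
        iff_false, not_forall, not_le]
      obtain ⟨n, hn⟩ := exists_nat_gt (-(f x))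
      exact ⟨n, by linarith⟩
    rw [hempty] at this
    exact hne_empty this
  set r₀ : ℝ := sInf T with hr₀
  have hIic : f ⁻¹' (Set.Iic r₀) ∈ residual (ℕ → Bool) := by
    have heq : f ⁻¹' (Set.Iic r₀) = ⋂ n : ℕ, f ⁻¹' (Set.Iic (r₀ + 1 / (n + 1))) := by
      ext x
      simp only [Set.mem_preimage, Set.mem_Iic, Set.mem_iInter]
      constructor
      · intro hx n
        have : (0:ℝ) < 1 / (n + 1) := by positivity
        linarith
      · intro hx
        by_contra hlt
        push_neg at hlt
        obtain ⟨n, hn⟩ := exists_nat_one_div_lt (show (0:ℝ) < f x - r₀ by linarith)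
        have := hx n
        linarith
    rw [heq]
    refine (countable_iInter_mem).mpr fun n => ?_
    have hpos : (0:ℝ) < 1 / (n + 1) := by positivity
    have : sInf T < r₀ + 1 / (n + 1) := by linarith
    obtain ⟨r, hrT, hrlt⟩ := (csInf_lt_iff hTbdd hTne).mp this
    exact hmono r _ hrlt.le hrT
  have hIio : IsMeagre (f ⁻¹' (Set.Iio r₀)) := by
    have heq : f ⁻¹' (Set.Iio r₀) = ⋃ n : ℕ, f ⁻¹' (Set.Iic (r₀ - 1 / (n + 1))) := by
      ext x
      simp only [Set.mem_preimage, Set.mem_Iio, Set.mem_iUnion, Set.mem_Iic]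
      constructor
      · intro hx
        obtain ⟨n, hn⟩ := exists_nat_one_div_lt (show (0:ℝ) < r₀ - f x by linarith)
        exact ⟨n, by linarith⟩
      · rintro ⟨n, hn⟩
        have : (0:ℝ) < 1 / (n + 1) := by positivity
        linarith
    rw [heq]
    refine isMeagre_iUnion fun n => ?_
    have hpos : (0:ℝ) < 1 / (n + 1) := by positivity
    have hnotin : (r₀ - 1 / (n + 1)) ∉ T := by
      intro hmem
      have := csInf_le hTbdd hmem
      rw [← hr₀] at this
      linarith
    rcases h01 (Set.Iic (r₀ - 1 / (n + 1))) measurableSet_Iic with hc | hm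
    · exact absurd hc hnotin
    · exact hm
  -- the fiber over r₀ is comeager
  have hfib : f ⁻¹' {r₀} ∈ residual (ℕ → Bool) := by
    have heq : f ⁻¹' {r₀} = f ⁻¹' (Set.Iic r₀) ∩ (f ⁻¹' (Set.Iio r₀))ᶜ := by
      ext x
      simp only [Set.mem_preimage, Set.mem_singleton_iff, Set.mem_inter_iff,
        Set.mem_compl_iff, Set.mem_Iic, Set.mem_Iio, not_lt]
      constructor
      · exact fun h => ⟨le_of_eq h, ge_of_eq h⟩
      · rintro ⟨h1, h2⟩; exact le_antisymm h1 h2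
    rw [heq]
    exact Filter.inter_mem hIic hIio
  obtain ⟨A, hA⟩ := (dense_of_mem_residual hfib).nonempty
  -- the E0-class of A is countable, hence meager
  set K : Set (ℕ → Bool) := {B | E0 A B} with hK
  have hKc : K.Countable := by
    have hsub : K ⊆ Set.range (fun s : Finset ℕ => (fun k => if k ∈ s then !(A k) else A k : ℕ → Bool)) := by
      rintro B ⟨n, hn⟩
      refine ⟨(Finset.range n).filter (fun k => B k ≠ A k), ?_⟩
      funext k
      by_cases hk : k ∈ (Finset.range n).filter (fun k => B k ≠ A k)
      · simp only [hk, if_true]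
        rw [Finset.mem_filter] at hk
        exact (Bool.eq_not_of_ne hk.2).symm
      · simp only [hk, if_false]
        rw [Finset.mem_filter, Finset.mem_range] at hk
        push_neg at hk
        by_cases hkn : k < n
        · exact (hk hkn).symm
        · exact hn k (Nat.le_of_not_lt hkn)
    exact (Set.countable_range _).mono hsub
  have hKm : IsMeagre K := countable_isMeagre hKc
  have hgood : (f ⁻¹' {r₀} ∩ Kᶜ) ∈ residual (ℕ → Bool) := Filter.inter_mem hfib hKm
  obtain ⟨B, hB1, hB2⟩ := (dense_of_mem_residual hgood).nonempty
  have hfB : f B = r₀ := hB1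
  have hfA : f A = r₀ := hA
  have : E0 A B := (hred A B).mpr (by rw [hfA, hfB])
  exact hB2 this
end

section
/- E'_0 is generically ergodic: any E'_0-invariant subset of 2^ℕ with the Baire property is either meagre or comeagre. -/
/-- Number of elements of `A` (as an element of `2^ℕ`) below `n`. -/
def cardBelow (n : ℕ) (A : ℕ → Bool) : ℕ :=
  ((Finset.range n).filter fun k => A k = true).card

/-- `E₀'` on `2^ℕ`: equal cardinality below some `n` and agreement from `n` on. -/
def E0' (A B : ℕ → Bool) : Prop :=
  ∃ n : ℕ, cardBelow n A = cardBelow n B ∧ ∀ k : ℕ, n ≤ k → A k = B k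

/-!
Permutations of `ℕ` that fix every point from some `n` on act on `2^ℕ` by homeomorphisms
preserving `E₀'`. If an invariant set `S` with the Baire property were neither meagre nor
comeagre, it would be comeagre in a nonempty open set `U` and meagre in a nonempty open set `V`.
Swapping two initial blocks of coordinates moves `U` to meet `V`, and on the nonempty open
intersection `S` would be both meagre and comeagre, contradicting the Baire category theorem.
-/

open Topology PiNat

section GenericErgodicity

variable {X : Type*} [TopologicalSpace X]

theorem Filter.EventuallyEq.isMeagre_diff {s t : Set X} (h : s =ᵇ t) : IsMeagre (s \ t) :=
  Filter.mem_of_superset (Filter.eventuallyEq_set.mp h) fun _ hx hst => hst.2 (hx.mp hst.1)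

theorem BaireMeasurableSet.exists_isOpen_isMeagre_diff {S : Set X} (hS : BaireMeasurableSet S)
    (hS_not : ¬IsMeagre S) : ∃ U, IsOpen U ∧ U.Nonempty ∧ IsMeagre (U \ S) := by
  obtain ⟨U, hU, hSU⟩ := hS.residualEq_isOpen
  refine ⟨U, hU, Set.nonempty_iff_ne_empty.mpr fun hU_empty => ?_, hSU.symm.isMeagre_diff⟩
  exact hS_not (by simpa [hU_empty] using hSU.isMeagre_diff)

theorem BaireMeasurableSet.isMeagre_or_isMeagre_compl_of_exists_homeomorph [BaireSpace X]
    {S : Set X} (hS : BaireMeasurableSet S)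
    (htrans : ∀ U V : Set X, IsOpen U → IsOpen V → U.Nonempty → V.Nonempty →
      ∃ h : X ≃ₜ X, (∀ z, h z ∈ S → z ∈ S) ∧ (V ∩ h ⁻¹' U).Nonempty) :
    IsMeagre S ∨ IsMeagre Sᶜ := by
  by_contra! ⟨hS_not, hSc_not⟩
  obtain ⟨U, hU, hU_ne, hUS⟩ := hS.exists_isOpen_isMeagre_diff hS_not
  obtain ⟨V, hV, hV_ne, hVS⟩ := hS.compl.exists_isOpen_isMeagre_diff hSc_not
  obtain ⟨h, hh, hW_ne⟩ := htrans U V hU hV hU_ne hV_ne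
  have hW : IsMeagre (V ∩ h ⁻¹' U) := by
    refine ((hUS.preimage_of_isOpenMap h.continuous h.isOpenMap).union hVS).mono ?_
    rintro z ⟨hzV, hzU⟩
    by_cases hz : z ∈ S
    · exact Or.inr ⟨hzV, not_not.mpr hz⟩
    · exact Or.inl ⟨hzU, fun hhz => hz (hh z hhz)⟩
  exact not_isMeagre_of_isOpen (hV.inter (hU.preimage h.continuous)) hW_ne hW

end GenericErgodicity

section FinitaryPermutation

variable {π : Equiv.Perm ℕ} {n : ℕ}

theorem cardBelow_comp_perm (hπ : ∀ k, n ≤ k → π k = k) (A : ℕ → Bool) :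
    cardBelow n (A ∘ π) = cardBelow n A := by
  have hsupp : {k | π k ≠ k} ⊆ Finset.range n := fun k hk =>
    Finset.mem_range.mpr (not_le.mp fun hnk => hk (hπ k hnk))
  unfold cardBelow
  conv_rhs => rw [← Finset.map_perm hsupp, Finset.filter_map, Finset.card_map]
  rfl

theorem E0'_comp_perm (hπ : ∀ k, n ≤ k → π k = k) (A : ℕ → Bool) : E0' (A ∘ π) A :=
  ⟨n, cardBelow_comp_perm hπ A, fun k hk => congrArg A (hπ k hk)⟩

end FinitaryPermutation

def blockSwap (N : ℕ) : Equiv.Perm ℕ :=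
  Function.Involutive.toPerm (fun i => if i < N then i + N else if i < 2 * N then i - N else i)
    (by intro i; dsimp only; split_ifs <;> omega)

theorem blockSwap_of_lt {N i : ℕ} (hi : i < N) : blockSwap N i = i + N :=
  if_pos hi

theorem blockSwap_of_le {N i : ℕ} (hi : 2 * N ≤ i) : blockSwap N i = i :=
  (if_neg (by omega)).trans (if_neg (by omega))

section Cylinder

variable {α : Type*} [TopologicalSpace α] [DiscreteTopology α]

theorem exists_cylinder_subset {U : Set (ℕ → α)} (hU : IsOpen U) (hU_ne : U.Nonempty) :
    ∃ x n, cylinder x n ⊆ U := by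
  obtain ⟨_, ⟨x, n, rfl⟩, -, hsub⟩ :=
    (isTopologicalBasis_cylinders fun _ => α).exists_subset_of_mem_open hU_ne.some_mem hU
  exact ⟨x, n, hsub⟩

/-- The witness starts with a prefix of a point of `V`, followed by a prefix of a point of `U`. -/
theorem exists_comp_blockSwap_mem {U V : Set (ℕ → α)} (hU : IsOpen U) (hV : IsOpen V)
    (hU_ne : U.Nonempty) (hV_ne : V.Nonempty) : ∃ N, ∃ z ∈ V, z ∘ blockSwap N ∈ U := by
  obtain ⟨x, n, hxU⟩ := exists_cylinder_subset hU hU_ne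
  obtain ⟨y, m, hyV⟩ := exists_cylinder_subset hV hV_ne
  set N := max n m
  refine ⟨N, fun i => if i < N then y i else x (i - N), hyV fun i hi => ?_, hxU fun i hi => ?_⟩
  · have hiN : i < N := lt_of_lt_of_le hi (le_max_right n m)
    simp [hiN]
  · have hiN : i < N := lt_of_lt_of_le hi (le_max_left n m)
    simp [blockSwap_of_lt hiN]

end Cylinder

/-- `E₀'` is generically ergodic: every `E₀'`-invariant set with the Baire
property is meagre or comeagre. -/
theorem E0'_generically_ergodic (S : Set (ℕ → Bool))
    (hBP : BaireMeasurableSet S)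
    (hinv : ∀ A B : ℕ → Bool, A ∈ S → E0' A B → B ∈ S) :
    IsMeagre S ∨ IsMeagre Sᶜ := by
  refine hBP.isMeagre_or_isMeagre_compl_of_exists_homeomorph fun U V hU hV hU_ne hV_ne => ?_
  obtain ⟨N, z, hzV, hzU⟩ := exists_comp_blockSwap_mem hU hV hU_ne hV_ne
  refine ⟨(Homeomorph.piCongrLeft (Y := fun _ => Bool) (blockSwap N)).symm, fun A hA => ?_,
    z, hzV, ?_⟩
  · exact hinv _ A hA (E0'_comp_perm (fun k hk => blockSwap_of_le hk) A)
  · simpa [Homeomorph.piCongrLeft_symm_apply, Function.comp_def] using hzU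
end

section
/- Let E be a meagre equivalence relation on 2^ℕ × 2^ℕ containing E'_0. Then E_0 continuously reduces to E: there is a continuous function f : 2^ℕ → 2^ℕ such that for all α, β, α E_0 β iff f(α) E f(β). -/
/-!
The complement of `E` contains `⋂ₙ Wₙ` for a decreasing sequence of dense open sets `Wₙ`. The
reduction reads `α` bit by bit and at stage `m` appends one of two blocks `u`, `v` having the same
length and the same number of `true`s; since only finitely many outputs of the current length
exist, the blocks can be chosen so that any two such outputs, followed by `u` and by `v`
respectively, determine cylinders whose product lies in `W m`. Eventually equal inputs then have
`E₀'`-related images, while inputs differing infinitely often have images that lie, in one order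
or the other, in every `Wₙ`, hence are not `E`-related because `E` is symmetric.
-/

open Set PiNat Topology

theorem IsMeagre.exists_antitone_isOpen_dense {X : Type*} [TopologicalSpace X] {s : Set X}
    (hs : IsMeagre s) :
    ∃ W : ℕ → Set X, Antitone W ∧ (∀ n, IsOpen (W n)) ∧ (∀ n, Dense (W n)) ∧
      ⋂ n, W n ⊆ sᶜ := by
  obtain ⟨S, hSo, hSd, hSc, hS⟩ := mem_residual_iff.1 hs
  obtain ⟨g, hg⟩ := (hSc.insert univ).exists_eq_range (insert_nonempty _ _)
  have hg_open_dense (k : ℕ) : IsOpen (g k) ∧ Dense (g k) := by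
    rcases (hg ▸ mem_range_self k : g k ∈ insert univ S) with h | h
    · exact h ▸ ⟨isOpen_univ, dense_univ⟩
    · exact ⟨hSo _ h, hSd _ h⟩
  have hfin (n : ℕ) : (g '' Iic n).Finite := (finite_Iic n).image g
  refine ⟨fun n => ⋂₀ (g '' Iic n), fun m n hmn => sInter_subset_sInter (image_mono
    (Iic_subset_Iic.2 hmn)), fun n => (hfin n).isOpen_sInter ?_,
    fun n => (hfin n).dense_sInter ?_ ?_, ?_⟩
  · exact forall_mem_image.2 fun k _ => (hg_open_dense k).1
  · exact forall_mem_image.2 fun k _ => (hg_open_dense k).1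
  · exact forall_mem_image.2 fun k _ => (hg_open_dense k).2
  · refine fun x hx => hS fun t ht => ?_
    obtain ⟨k, rfl⟩ : t ∈ range g := hg ▸ mem_insert_of_mem _ ht
    exact mem_iInter.1 hx k _ (mem_image_of_mem g (mem_Iic.2 le_rfl))

theorem PiNat.exists_cylinder_subset {E : ℕ → Type*} [∀ n, TopologicalSpace (E n)]
    [∀ n, DiscreteTopology (E n)] {x : ∀ n, E n} {u : Set (∀ n, E n)} (hu : u ∈ 𝓝 x) :
    ∃ n, cylinder x n ⊆ u := by
  obtain ⟨_, ⟨z, n, rfl⟩, hx, hsub⟩ := (isTopologicalBasis_cylinders E).mem_nhds_iff.1 hu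
  exact ⟨n, mem_cylinder_iff_eq.1 hx ▸ hsub⟩

theorem PiNat.exists_cylinder_prod_subset {E F : ℕ → Type*} [∀ n, TopologicalSpace (E n)]
    [∀ n, DiscreteTopology (E n)] [∀ n, TopologicalSpace (F n)] [∀ n, DiscreteTopology (F n)]
    {x : ∀ n, E n} {y : ∀ n, F n} {W : Set ((∀ n, E n) × (∀ n, F n))} (hW : W ∈ 𝓝 (x, y)) :
    ∃ n, cylinder x n ×ˢ cylinder y n ⊆ W := by
  obtain ⟨u, hu, v, hv, huv⟩ := mem_nhds_prod_iff.1 hW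
  obtain ⟨m, hm⟩ := exists_cylinder_subset hu
  obtain ⟨n, hn⟩ := exists_cylinder_subset hv
  exact ⟨max m n, (prod_mono ((cylinder_anti x (le_max_left m n)).trans hm)
    ((cylinder_anti y (le_max_right m n)).trans hn)).trans huv⟩

theorem cardBelow_eq_count (n : ℕ) (x : ℕ → Bool) :
    cardBelow n x = ((List.range n).map x).count true := by
  rw [cardBelow, Finset.card_def, Finset.filter_val, Finset.range_val, Multiset.range,
    Multiset.filter_coe, Multiset.coe_card, List.count, List.countP_map,
    List.countP_eq_length_filter]
  rfl

namespace E0Reduction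

def cyl (L : List Bool) : Set (ℕ → Bool) := {x | (List.range L.length).map x = L}

theorem mem_cyl_iff {L : List Bool} {x : ℕ → Bool} :
    x ∈ cyl L ↔ ∀ i (hi : i < L.length), x i = L[i] := by
  simp [cyl, List.ext_getElem_iff]

theorem cyl_eq_cylinder {L : List Bool} {x : ℕ → Bool} (hx : x ∈ cyl L) :
    cyl L = cylinder x L.length := by
  ext y
  simp_all [mem_cyl_iff, mem_cylinder_iff]

theorem isOpen_cyl (L : List Bool) : IsOpen (cyl L) :=
  isOpen_iff_forall_mem_open.2 fun x hx =>
    ⟨cyl L, subset_rfl, cyl_eq_cylinder hx ▸ isOpen_cylinder _ x _, hx⟩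

theorem cyl_nonempty (L : List Bool) : (cyl L).Nonempty :=
  ⟨fun i => L.getD i false, mem_cyl_iff.2 fun i hi => by simp [hi]⟩

theorem cyl_append_subset (L M : List Bool) : cyl (L ++ M) ⊆ cyl L := fun x hx =>
  mem_cyl_iff.2 fun i hi => by
    rw [mem_cyl_iff.1 hx i (by simp; omega), List.getElem_append_left]

theorem mem_cyl_append_restrict {L : List Bool} {x : ℕ → Bool} (hx : x ∈ cyl L) (k : ℕ) :
    x ∈ cyl (L ++ (List.range k).map fun i => x (L.length + i)) := by
  rw [cyl, mem_ofPred_eq] at hx ⊢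
  rw [List.length_append, List.length_map, List.length_range, List.range_add, List.map_append,
    hx, List.map_map]
  rfl

theorem exists_cyl_prod_subset {W : Set ((ℕ → Bool) × (ℕ → Bool))} (hWo : IsOpen W)
    (hWd : Dense W) (p q : List Bool) : ∃ s t : List Bool, cyl (p ++ s) ×ˢ cyl (q ++ t) ⊆ W := by
  obtain ⟨⟨x, y⟩, ⟨hx, hy⟩, hxy⟩ := hWd.inter_open_nonempty _ ((isOpen_cyl p).prod (isOpen_cyl q))
    ((cyl_nonempty p).prod (cyl_nonempty q))
  obtain ⟨n, hn⟩ := exists_cylinder_prod_subset (hWo.mem_nhds hxy)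
  refine ⟨(List.range n).map fun i => x (p.length + i),
    (List.range n).map fun i => y (q.length + i), ?_⟩
  rw [cyl_eq_cylinder (mem_cyl_append_restrict hx n),
    cyl_eq_cylinder (mem_cyl_append_restrict hy n)]
  exact (prod_mono (cylinder_anti _ (by simp)) (cylinder_anti _ (by simp))).trans hn

theorem exists_cyl_prod_subset_of_finite {W : Set ((ℕ → Bool) × (ℕ → Bool))} (hWo : IsOpen W)
    (hWd : Dense W) {P : Set (List Bool × List Bool)} (hP : P.Finite) :
    ∃ s t : List Bool, ∀ pq ∈ P, cyl (pq.1 ++ s) ×ˢ cyl (pq.2 ++ t) ⊆ W := by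
  induction P, hP using Set.Finite.induction_on with
  | empty => exact ⟨[], [], by simp⟩
  | @insert a P _ _ ih =>
    obtain ⟨s, t, hst⟩ := ih
    obtain ⟨s', t', h'⟩ := exists_cyl_prod_subset hWo hWd (a.1 ++ s) (a.2 ++ t)
    refine ⟨s ++ s', t ++ t', forall_mem_insert.2 ⟨?_, fun pq hpq => ?_⟩⟩
    · simpa only [List.append_assoc] using h'
    · rw [← List.append_assoc, ← List.append_assoc]
      exact (prod_mono (cyl_append_subset _ _) (cyl_append_subset _ _)).trans (hst pq hpq)

theorem exists_blocks {W : Set ((ℕ → Bool) × (ℕ → Bool))} (hWo : IsOpen W) (hWd : Dense W)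
    (ℓ : ℕ) : ∃ u v : List Bool, u.length = v.length ∧ u.count true = v.count true ∧ u ≠ [] ∧
      ∀ p q : List Bool, p.length = ℓ → q.length = ℓ → cyl (p ++ u) ×ˢ cyl (q ++ v) ⊆ W := by
  obtain ⟨s, t, hst⟩ := exists_cyl_prod_subset_of_finite hWo hWd
    ((List.finite_length_eq Bool ℓ).prod (List.finite_length_eq Bool ℓ))
  refine ⟨s ++ (t ++ [false]), t ++ (s ++ [false]), by simp; omega,
    by simp only [List.count_append]; omega, by simp, fun p q hp hq => ?_⟩
  rw [← List.append_assoc p, ← List.append_assoc q]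
  exact (prod_mono (cyl_append_subset _ _) (cyl_append_subset _ _)).trans (hst (p, q) ⟨hp, hq⟩)

section Construction

variable (u v : ℕ → ℕ → List Bool)

def stageLength : ℕ → ℕ
  | 0 => 0
  | m + 1 => stageLength m + (u (stageLength m) m).length

/-- The output of the reduction after reading `m` bits of `α`: bit `α m` selects which of the
blocks `u ℓ m`, `v ℓ m` comes next, where `ℓ` is the length reached so far. -/
def approx (α : ℕ → Bool) : ℕ → List Bool
  | 0 => []
  | m + 1 => approx α m ++ cond (α m) (v (stageLength u m) m) (u (stageLength u m) m)

def reduction (α : ℕ → Bool) (n : ℕ) : Bool := (approx u v α (n + 1)).getD n false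

theorem approx_congr {α β : ℕ → Bool} {m : ℕ} (h : ∀ k < m, α k = β k) :
    approx u v α m = approx u v β m := by
  induction m with
  | zero => rfl
  | succ m ih =>
    rw [approx, approx, ih fun k hk => h k (by omega), h m (by omega)]

theorem approx_prefix (α : ℕ → Bool) {m m' : ℕ} (h : m ≤ m') :
    approx u v α m <+: approx u v α m' := by
  induction m', h using Nat.le_induction with
  | base => exact List.prefix_refl _
  | succ m' _ ih => exact ih.trans (List.prefix_append _ _)

theorem exists_approx_eq_append {α β : ℕ → Bool} {n m : ℕ} (h : ∀ k, n ≤ k → α k = β k)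
    (hm : n ≤ m) :
    ∃ D, approx u v α m = approx u v α n ++ D ∧ approx u v β m = approx u v β n ++ D := by
  induction m, hm using Nat.le_induction with
  | base => exact ⟨[], by simp, by simp⟩
  | succ m hnm ih =>
    obtain ⟨D, hα, hβ⟩ := ih
    exact ⟨D ++ cond (α m) (v (stageLength u m) m) (u (stageLength u m) m),
      by rw [approx, hα, List.append_assoc], by rw [approx, hβ, List.append_assoc, h m hnm]⟩

theorem continuous_reduction : Continuous (reduction u v) :=
  continuous_pi fun n => IsLocallyConstant.continuous <| IsLocallyConstant.iff_exists_open _ |>.2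
    fun α => ⟨cylinder α (n + 1), isOpen_cylinder _ α _, self_mem_cylinder α _, fun _ hβ => by
      rw [reduction, approx_congr u v (mem_cylinder_iff.1 hβ)]; rfl⟩

variable {u v}

theorem length_approx (hlen : ∀ ℓ m, (u ℓ m).length = (v ℓ m).length) (α : ℕ → Bool) (m : ℕ) :
    (approx u v α m).length = stageLength u m := by
  induction m with
  | zero => rfl
  | succ m ih => cases h : α m <;> simp [approx, stageLength, hlen, ih, h]

theorem count_approx (hcount : ∀ ℓ m, (u ℓ m).count true = (v ℓ m).count true)
    (α β : ℕ → Bool) (m : ℕ) : (approx u v α m).count true = (approx u v β m).count true := by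
  induction m with
  | zero => rfl
  | succ m ih => cases hα : α m <;> cases hβ : β m <;> simp [approx, hcount, ih, hα, hβ]

theorem le_stageLength (hne : ∀ ℓ m, u ℓ m ≠ []) (m : ℕ) : m ≤ stageLength u m := by
  induction m with
  | zero => rfl
  | succ m ih =>
    have := List.length_pos_iff.2 (hne (stageLength u m) m)
    rw [stageLength]; omega

theorem reduction_eq_getD (hlen : ∀ ℓ m, (u ℓ m).length = (v ℓ m).length)
    (hne : ∀ ℓ m, u ℓ m ≠ []) {α : ℕ → Bool} {k m : ℕ} (hk : k < stageLength u m) :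
    reduction u v α k = (approx u v α m).getD k false := by
  have hgetD {m'} (hm' : m' ≤ max (k + 1) m) (hk' : k < stageLength u m') :
      (approx u v α m').getD k false = (approx u v α (max (k + 1) m)).getD k false := by
    have hk'' : k < (approx u v α m').length := length_approx hlen α m' ▸ hk'
    rw [List.getD_eq_getElem _ _ hk'', (approx_prefix u v α hm').getElem hk'',
      List.getD_eq_getElem]
  exact (hgetD (le_max_left _ _) ((Nat.lt_succ_self k).trans_le (le_stageLength hne _))).trans
    (hgetD (le_max_right _ _) hk).symm

theorem reduction_mem_cyl (hlen : ∀ ℓ m, (u ℓ m).length = (v ℓ m).length)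
    (hne : ∀ ℓ m, u ℓ m ≠ []) (α : ℕ → Bool) (m : ℕ) : reduction u v α ∈ cyl (approx u v α m) :=
  mem_cyl_iff.2 fun i hi => by
    rw [reduction_eq_getD hlen hne (length_approx hlen α m ▸ hi), List.getD_eq_getElem]

theorem E0'_reduction (hlen : ∀ ℓ m, (u ℓ m).length = (v ℓ m).length)
    (hcount : ∀ ℓ m, (u ℓ m).count true = (v ℓ m).count true) (hne : ∀ ℓ m, u ℓ m ≠ [])
    {α β : ℕ → Bool} (h : E0 α β) : E0' (reduction u v α) (reduction u v β) := by
  obtain ⟨n, hn⟩ := h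
  have hinit (γ : ℕ → Bool) :
      (List.range (stageLength u n)).map (reduction u v γ) = approx u v γ n :=
    length_approx hlen γ n ▸ reduction_mem_cyl hlen hne γ n
  refine ⟨stageLength u n, ?_, fun k hk => ?_⟩
  · rw [cardBelow_eq_count, cardBelow_eq_count, hinit, hinit, count_approx hcount]
  · obtain ⟨D, hα, hβ⟩ := exists_approx_eq_append u v hn (le_max_left n (k + 1))
    have hk' : k < stageLength u (max n (k + 1)) :=
      (Nat.lt_succ_self k).trans_le ((le_max_right _ _).trans (le_stageLength hne _))
    rw [reduction_eq_getD hlen hne hk', reduction_eq_getD hlen hne hk', hα, hβ,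
      List.getD_append_right _ _ _ _ (by rwa [length_approx hlen]),
      List.getD_append_right _ _ _ _ (by rwa [length_approx hlen]),
      length_approx hlen, length_approx hlen]

variable {W : ℕ → Set ((ℕ → Bool) × (ℕ → Bool))}

theorem reduction_mem (hlen : ∀ ℓ m, (u ℓ m).length = (v ℓ m).length) (hne : ∀ ℓ m, u ℓ m ≠ [])
    (hsub : ∀ ℓ m p q, p.length = ℓ → q.length = ℓ → cyl (p ++ u ℓ m) ×ˢ cyl (q ++ v ℓ m) ⊆ W m)
    {α β : ℕ → Bool} {m : ℕ} (hα : α m = false) (hβ : β m = true) :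
    (reduction u v α, reduction u v β) ∈ W m := by
  refine hsub _ m _ _ (length_approx hlen α m) (length_approx hlen β m) ⟨?_, ?_⟩
  · simpa [approx, hα] using reduction_mem_cyl hlen hne α (m + 1)
  · simpa [approx, hβ] using reduction_mem_cyl hlen hne β (m + 1)

theorem reduction_mem_or_swap_mem (hlen : ∀ ℓ m, (u ℓ m).length = (v ℓ m).length)
    (hne : ∀ ℓ m, u ℓ m ≠ []) (hanti : Antitone W)
    (hsub : ∀ ℓ m p q, p.length = ℓ → q.length = ℓ → cyl (p ++ u ℓ m) ×ˢ cyl (q ++ v ℓ m) ⊆ W m)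
    {α β : ℕ → Bool} (h : ¬E0 α β) (j : ℕ) :
    (reduction u v α, reduction u v β) ∈ W j ∨ (reduction u v β, reduction u v α) ∈ W j := by
  obtain ⟨m, hjm, hm⟩ := (show ∀ n, ∃ m, n ≤ m ∧ α m ≠ β m by simpa [E0] using h) j
  cases hα : α m <;> cases hβ : β m <;> simp only [hα, hβ, ne_eq, not_true_eq_false] at hm
  · exact .inl (hanti hjm (reduction_mem hlen hne hsub hα hβ))
  · exact .inr (hanti hjm (reduction_mem hlen hne hsub hβ hα))

end Construction

end E0Reduction

open E0Reduction

/-- If `E` is a meagre equivalence relation on `2^ℕ` containing `E₀'`, then `E₀`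
continuously reduces to `E`. -/
theorem E0_reduces_to_meagre_equiv (E : (ℕ → Bool) → (ℕ → Bool) → Prop)
    (hE : Equivalence E)
    (hmeagre : IsMeagre {p : (ℕ → Bool) × (ℕ → Bool) | E p.1 p.2})
    (hE0' : ∀ A B : ℕ → Bool, E0' A B → E A B) :
    ∃ f : (ℕ → Bool) → (ℕ → Bool), Continuous f ∧
      ∀ α β : ℕ → Bool, E0 α β ↔ E (f α) (f β) := by
  obtain ⟨W, hanti, hWo, hWd, hWE⟩ := hmeagre.exists_antitone_isOpen_dense
  choose u v hlen hcount hne hsub using fun ℓ m => exists_blocks (hWo m) (hWd m) ℓ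
  refine ⟨reduction u v, continuous_reduction u v, fun α β =>
    ⟨fun h => hE0' _ _ (E0'_reduction hlen hcount hne h), fun h => ?_⟩⟩
  have hnotMem {x y : ℕ → Bool} (hxy : E x y) : ∃ j, (x, y) ∉ W j := by
    by_contra! hW
    exact hWE (mem_iInter.2 hW) hxy
  obtain ⟨j, hj⟩ := hnotMem h
  obtain ⟨j', hj'⟩ := hnotMem (hE.symm h)
  by_contra hαβ
  rcases reduction_mem_or_swap_mem hlen hne hanti hsub hαβ (max j j') with h' | h'
  · exact hj (hanti (le_max_left _ _) h')
  · exact hj' (hanti (le_max_right _ _) h')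
end

section
/- Every subset of 2^α (α a countable ordinal, with the lexicographic order) has a countable subset that is cofinal with respect to the lexicographic ordering. -/
/-- The strict lexicographic order on `α → Bool` for a well-ordered index set. -/
def lexLT {α : Type*} [LinearOrder α] (x y : α → Bool) : Prop :=
  ∃ γ : α, (∀ δ : α, δ < γ → x δ = y δ) ∧ x γ < y γ

/-- The lexicographic (reflexive) order on `α → Bool`. -/
def lexLE {α : Type*} [LinearOrder α] (x y : α → Bool) : Prop :=
  x = y ∨ lexLT x y

/-- The greedy supremum of a set `S ⊆ 2^α`, defined by well-founded recursion:
`u γ = true` iff some `s ∈ S` agrees with `u` strictly below `γ` and has `s γ = true`. -/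
noncomputable def greedySup {α : Type*} [LinearOrder α] [WellFoundedLT α]
    (S : Set (α → Bool)) : α → Bool :=
  (wellFounded_lt (α := α)).fix fun γ ih =>
    @decide (∃ s ∈ S, (∀ δ : α, (h : δ < γ) → s δ = ih δ h) ∧ s γ = true)
      (Classical.propDecidable _)

lemma greedySup_eq_true_iff {α : Type*} [LinearOrder α] [WellFoundedLT α]
    (S : Set (α → Bool)) (γ : α) :
    greedySup S γ = true ↔
      ∃ s ∈ S, (∀ δ : α, δ < γ → s δ = greedySup S δ) ∧ s γ = true := by
  have h := (wellFounded_lt (α := α)).fix_eq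
    (fun γ (ih : ∀ δ : α, δ < γ → Bool) =>
      @decide (∃ s ∈ S, (∀ δ : α, (h : δ < γ) → s δ = ih δ h) ∧ s γ = true)
        (Classical.propDecidable _)) γ
  unfold greedySup
  rw [h]
  exact Iff.trans (@decide_eq_true_iff _ (Classical.propDecidable _)) Iff.rfl

/-- Every subset of `2^α`, for `α` a countable well-order (countable ordinal),
has a countable subset cofinal for the lexicographic ordering. -/
theorem exists_countable_lex_cofinal {α : Type*} [LinearOrder α] [WellFoundedLT α]
    [Countable α] (S : Set (α → Bool)) :
    ∃ C ⊆ S, C.Countable ∧ ∀ s ∈ S, ∃ c ∈ C, lexLE s c := by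
  classical
  set u := greedySup S with hu
  -- choose witnesses for coordinates where u is true
  have hw : ∀ γ : α, u γ = true → ∃ s ∈ S, (∀ δ : α, δ < γ → s δ = u δ) ∧ s γ = true := by
    intro γ hγ
    exact (greedySup_eq_true_iff S γ).mp hγ
  choose! w hwS hwagree hwtrue using hw
  refine ⟨(S ∩ {u}) ∪ (w '' {γ | u γ = true}), ?_, ?_, ?_⟩
  · rintro c (⟨hc, -⟩ | ⟨γ, hγ, rfl⟩)
    · exact hc
    · exact hwS γ hγ
  · apply Set.Countable.union
    · exact (Set.countable_singleton u).mono Set.inter_subset_right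
    · exact (Set.to_countable _).image w
  · intro s hs
    by_cases hsu : s = u
    · exact ⟨u, Or.inl ⟨hsu ▸ hs, rfl⟩, Or.inl hsu⟩
    · -- least coordinate where s and u differ
      have hne : {δ : α | s δ ≠ u δ}.Nonempty := by
        by_contra h
        apply hsu
        funext δ
        by_contra hδ
        exact h ⟨δ, hδ⟩
      obtain ⟨γ, hγmem, hγmin⟩ := (wellFounded_lt (α := α)).has_min _ hne
      have hagree : ∀ δ : α, δ < γ → s δ = u δ := by
        intro δ hδ
        by_contra hne'
        exact hγmin δ hne' hδ
      have huγ : u γ = true := by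
        rcases Bool.eq_false_or_eq_true (u γ) with h | h
        · exact h
        · have hsγ : s γ = true := by
            rcases Bool.eq_false_or_eq_true (s γ) with h2 | h2
            · exact h2
            · exact absurd (h2.trans h.symm) hγmem
          have h3 : greedySup S γ = true :=
            (greedySup_eq_true_iff S γ).mpr ⟨s, hs, hagree, hsγ⟩
          rw [← hu, h] at h3
          simp at h3
      have hsγ : s γ = false := by
        rcases Bool.eq_false_or_eq_true (s γ) with h2 | h2
        · exact absurd (h2.trans huγ.symm) hγmem
        · exact h2
      refine ⟨w γ, Or.inr ⟨γ, huγ, rfl⟩, Or.inr ⟨γ, ?_, ?_⟩⟩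
      · intro δ hδ
        rw [hagree δ hδ, hwagree γ huγ δ hδ]
      · rw [hsγ, hwtrue γ huγ]
        exact Bool.false_lt_true
end

section
/- Suppose (e_i) is an unconditional basis and the isomorphism class 𝒜 = { A ⊆ ℕ : [e_i]_A ≅ [e_i]_ℕ } is comeagre in 2^ℕ. Then [e_i]_ℕ is isomorphic to its square [e_i]_ℕ ⊕ [e_i]_ℕ. -/
/-!
Split `ℕ` generically into two pieces: for a comeagre class `𝒜`, a Baire category argument in
`2^ℕ × 2^ℕ` yields disjoint `S`, `T` with `S`, `T` and `S ∪ T` all in `𝒜`. Unconditionality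
gives `‖u‖ ≤ K ‖u + v‖` for `u ∈ [e_i]_S`, `v ∈ [e_i]_T`, so `[e_i]_{S ∪ T}` is the direct sum
`[e_i]_S ⊕ [e_i]_T`, and therefore `X ≅ [e_i]_{S ∪ T} ≅ [e_i]_S ⊕ [e_i]_T ≅ X ⊕ X`.
-/

/-- `(e_i)` is an unconditional basic sequence with constant `K`. -/
def IsUnconditionalWithConstant {E : Type*} [NormedAddCommGroup E] [NormedSpace ℝ E]
    (e : ℕ → E) (K : ℝ) : Prop :=
  ∀ (n : ℕ) (A : Finset ℕ) (a : ℕ → ℝ), A ⊆ Finset.range (n + 1) →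
    ‖∑ i ∈ A, a i • e i‖ ≤ K * ‖∑ i ∈ Finset.range (n + 1), a i • e i‖

/-- The closed linear span of `(e_i)_{i ∈ S}`. -/
def closedSpan {E : Type*} [NormedAddCommGroup E] [NormedSpace ℝ E]
    (e : ℕ → E) (S : Set ℕ) : Submodule ℝ E :=
  (Submodule.span ℝ (e '' S)).topologicalClosure

theorem preimage_piMap_mem_residual {ι α β : Type*} [TopologicalSpace α] [DiscreteTopology α]
    [TopologicalSpace β] [DiscreteTopology β] {g : α → β} (hg : Function.Surjective g)
    {s : Set (ι → β)} (hs : s ∈ residual (ι → β)) :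
    Pi.map (fun _ ↦ g) ⁻¹' s ∈ residual (ι → α) :=
  tendsto_residual_of_isOpenMap (.piMap fun _ ↦ continuous_of_discreteTopology)
    (.piMap (fun _ _ _ ↦ isOpen_discrete _) (.of_forall fun _ ↦ hg)) hs

/-- A random pair `x, y` of subsets gives the disjoint sets `x \ y`, `y \ x` and their union
`x ∆ y`, each of which is a continuous open image of the pair. -/
theorem exists_disjoint_sup_mem_of_mem_residual {ι : Type*} {𝒜 : Set (ι → Bool)}
    (h𝒜 : 𝒜 ∈ residual (ι → Bool)) :
    ∃ a b : ι → Bool, Disjoint a b ∧ a ∈ 𝒜 ∧ b ∈ 𝒜 ∧ a ⊔ b ∈ 𝒜 := by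
  have mem (g : Bool × Bool → Bool) (hg : Function.Surjective g) :=
    preimage_piMap_mem_residual (ι := ι) hg h𝒜
  obtain ⟨ω, hω₀, hω₁, hω₂⟩ := (dense_of_mem_residual <|
    Filter.inter_mem (mem (fun p ↦ p.1 && !p.2) fun b ↦ ⟨(b, false), by cases b <;> rfl⟩) <|
    Filter.inter_mem (mem (fun p ↦ p.2 && !p.1) fun b ↦ ⟨(false, b), by cases b <;> rfl⟩)
      (mem (fun p ↦ p.1 ^^ p.2) fun b ↦ ⟨(b, false), by cases b <;> rfl⟩)).nonempty
  refine ⟨_, _, ?_, hω₀, hω₁, ?_⟩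
  · rw [disjoint_iff]
    funext i
    simp only [Pi.inf_apply, Pi.map_apply, Pi.bot_apply]
    cases (ω i).1 <;> cases (ω i).2 <;> rfl
  · convert Set.mem_preimage.1 hω₂ using 1
    funext i
    simp only [Pi.sup_apply, Pi.map_apply]
    cases (ω i).1 <;> cases (ω i).2 <;> rfl

section ClosedSpan

variable {E : Type*} [NormedAddCommGroup E] [NormedSpace ℝ E] {e : ℕ → E}

instance closedSpan.completeSpace [CompleteSpace E] (S : Set ℕ) :
    CompleteSpace (closedSpan e S) :=
  Submodule.topologicalClosure.completeSpace _

theorem closedSpan_union (S T : Set ℕ) :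
    closedSpan e (S ∪ T) = (closedSpan e S ⊔ closedSpan e T).topologicalClosure := by
  refine le_antisymm (Submodule.topologicalClosure_mono ?_) <|
    Submodule.topologicalClosure_minimal _ (sup_le ?_ ?_) (Submodule.isClosed_topologicalClosure _)
  · rw [Set.image_union, Submodule.span_union]
    exact sup_le_sup (Submodule.le_topologicalClosure _) (Submodule.le_topologicalClosure _)
  all_goals
    exact Submodule.topologicalClosure_mono (Submodule.span_mono (Set.image_mono (by simp)))

namespace IsUnconditionalWithConstant

variable {K : ℝ}

theorem norm_sum_le_of_subset (he : IsUnconditionalWithConstant e K) (c : ℕ → ℝ)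
    {F G : Finset ℕ} (hFG : F ⊆ G) :
    ‖∑ i ∈ F, c i • e i‖ ≤ K * ‖∑ i ∈ G, c i • e i‖ := by
  have hG : G ⊆ Finset.range (G.sup id + 1) := fun i hi ↦
    Finset.mem_range_succ_iff.2 (Finset.le_sup (f := id) hi)
  simpa only [ite_smul, zero_smul, Finset.sum_ite_mem, Finset.inter_eq_left.2 hFG,
    Finset.inter_eq_right.2 hG] using he _ F (fun i ↦ if i ∈ G then c i else 0) (hFG.trans hG)

theorem norm_le_norm_add_of_mem_span (he : IsUnconditionalWithConstant e K) {S T : Set ℕ}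
    (hST : Disjoint S T) {u v : E} (hu : u ∈ Submodule.span ℝ (e '' S))
    (hv : v ∈ Submodule.span ℝ (e '' T)) : ‖u‖ ≤ K * ‖u + v‖ := by
  rw [Finsupp.mem_span_image_iff_linearCombination] at hu hv
  obtain ⟨a, haS, rfl⟩ := hu
  obtain ⟨b, hbT, rfl⟩ := hv
  have hb : ∀ i ∈ a.support, b i = 0 := fun i hi ↦ Finsupp.notMem_support_iff.1 fun hi' ↦
    hST.ne_of_mem (haS hi) (hbT hi') rfl
  have hsum : Finsupp.linearCombination ℝ e (a + b) =
      ∑ i ∈ a.support ∪ b.support, (a + b) i • e i :=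
    Finsupp.linearCombination_apply_of_mem_supported ℝ
      ((Finsupp.mem_supported ℝ _).2 (by exact_mod_cast Finsupp.support_add))
  have ha : Finsupp.linearCombination ℝ e a = ∑ i ∈ a.support, (a + b) i • e i := by
    rw [Finsupp.linearCombination_apply_of_mem_supported ℝ (Finsupp.mem_supported_support ℝ a)]
    exact Finset.sum_congr rfl fun i hi ↦ by simp [hb i hi]
  rw [← map_add, hsum, ha]
  exact he.norm_sum_le_of_subset _ Finset.subset_union_left

theorem norm_le_norm_add_of_mem_closedSpan (he : IsUnconditionalWithConstant e K) {S T : Set ℕ}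
    (hST : Disjoint S T) : ∀ u ∈ closedSpan e S, ∀ v ∈ closedSpan e T, ‖u‖ ≤ K * ‖u + v‖ := by
  intro u hu v hv
  have hclosed : IsClosed {p : E × E | ‖p.1‖ ≤ K * ‖p.1 + p.2‖} :=
    isClosed_le (by fun_prop) (by fun_prop)
  have huv :
      (u, v) ∈ closure ((Submodule.span ℝ (e '' S) : Set E) ×ˢ Submodule.span ℝ (e '' T)) := by
    rw [closure_prod_eq]
    exact ⟨hu, hv⟩
  exact closure_minimal (fun p hp ↦ he.norm_le_norm_add_of_mem_span hST hp.1 hp.2) hclosed huv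

end IsUnconditionalWithConstant

end ClosedSpan

namespace Submodule

variable {E : Type*} [NormedAddCommGroup E] [NormedSpace ℝ E] {p q : Submodule ℝ E} {K : ℝ}

theorem antilipschitz_coprod_subtypeL (h : ∀ u ∈ p, ∀ v ∈ q, ‖u‖ ≤ K * ‖u + v‖) :
    AntilipschitzWith (K + 1).toNNReal (p.subtypeL.coprod q.subtypeL) := by
  refine ContinuousLinearMap.antilipschitz_of_bound _ fun x ↦ ?_
  have hu : ‖(x.1 : E)‖ ≤ K * ‖(x.1 : E) + x.2‖ := h _ x.1.2 _ x.2.2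
  have hv : ‖(x.2 : E)‖ ≤ ‖(x.1 : E) + x.2‖ + ‖(x.1 : E)‖ := by
    simpa using norm_sub_le ((x.1 : E) + x.2) x.1
  have hK : K + 1 ≤ (K + 1).toNNReal := Real.le_coe_toNNReal _
  simp only [ContinuousLinearMap.coprod_apply, coe_subtypeL, coe_subtype, Prod.norm_def,
    coe_norm]
  have hw := norm_nonneg ((x.1 : E) + x.2)
  exact max_le (by nlinarith) (by nlinarith)

theorem range_coprod_subtypeL : (p.subtypeL.coprod q.subtypeL).range = p ⊔ q := by
  simp [LinearMap.range_coprod]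

variable [CompleteSpace p] [CompleteSpace q]

theorem isClosed_range_coprod_subtypeL (h : ∀ u ∈ p, ∀ v ∈ q, ‖u‖ ≤ K * ‖u + v‖) :
    IsClosed (Set.range (p.subtypeL.coprod q.subtypeL)) :=
  (antilipschitz_coprod_subtypeL h).isClosed_range (ContinuousLinearMap.uniformContinuous _)

theorem isClosed_sup_of_norm_le (h : ∀ u ∈ p, ∀ v ∈ q, ‖u‖ ≤ K * ‖u + v‖) :
    IsClosed ((p ⊔ q : Submodule ℝ E) : Set E) := by
  rw [← range_coprod_subtypeL, LinearMap.coe_range]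
  exact isClosed_range_coprod_subtypeL h

noncomputable def prodEquivSupOfNormLe [CompleteSpace E]
    (h : ∀ u ∈ p, ∀ v ∈ q, ‖u‖ ≤ K * ‖u + v‖) : (p × q) ≃L[ℝ] ↥(p ⊔ q) :=
  ((p.subtypeL.coprod q.subtypeL).equivRange (antilipschitz_coprod_subtypeL h).injective
    (isClosed_range_coprod_subtypeL h)).trans (.ofEq _ _ range_coprod_subtypeL)

end Submodule

theorem comeagre_class_square_general {X : Type*} [NormedAddCommGroup X] [NormedSpace ℝ X]
    [CompleteSpace X] (e : ℕ → X) (K : ℝ)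
    (huncond : IsUnconditionalWithConstant e K)
    (hcomeagre :
      IsMeagre {A : ℕ → Bool |
        Nonempty ((closedSpan e {i : ℕ | A i = true}) ≃L[ℝ] X)}ᶜ) :
    Nonempty (X ≃L[ℝ] X × X) := by
  rw [IsMeagre, compl_compl] at hcomeagre
  obtain ⟨a, b, hab, ⟨φa⟩, ⟨φb⟩, ⟨φ⟩⟩ := exists_disjoint_sup_mem_of_mem_residual hcomeagre
  set S := {i | a i = true}
  set T := {i | b i = true}
  have hST : Disjoint S T := Set.disjoint_left.2 fun i (ha : a i = true) (hb : b i = true) ↦ by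
    simpa [ha, hb] using congrFun hab.eq_bot i
  have hnorm := huncond.norm_le_norm_add_of_mem_closedSpan hST
  have hunion : {i | (a ⊔ b) i = true} = S ∪ T := by ext; simp [S, T]
  rw [hunion, closedSpan_union,
    (Submodule.isClosed_sup_of_norm_le hnorm).submodule_topologicalClosure_eq] at φ
  exact ⟨φ.symm.trans ((Submodule.prodEquivSupOfNormLe hnorm).symm.trans (φa.prodCongr φb))⟩

/-- If `(e_i)` is an unconditional basis of `X` and the isomorphism class
`𝒜 = {A : [e_i]_A ≅ X}` is comeagre in `2^ℕ`, then `X` is isomorphic to its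
square `X ⊕ X`. -/
theorem comeagre_class_square {X : Type*} [NormedAddCommGroup X] [NormedSpace ℝ X]
    [CompleteSpace X] (e : ℕ → X) (K : ℝ) (hK : 1 ≤ K) (hne : ∀ i, e i ≠ 0)
    (huncond : IsUnconditionalWithConstant e K)
    (hbasis : closedSpan e Set.univ = ⊤)
    (hcomeagre :
      IsMeagre {A : ℕ → Bool |
        Nonempty ((closedSpan e {i : ℕ | A i = true}) ≃L[ℝ] X)}ᶜ) :
    Nonempty (X ≃L[ℝ] X × X) :=
  comeagre_class_square_general e K huncond hcomeagre
end

section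
/- Let (e_i) be an unconditional basic sequence permutatively equivalent to all of its subsequences, witnessed by a permutation π of an infinite set B with (e_{π(i)})_{i∈B} subsymmetric. Then there exists an infinite A ⊆ B such that (e_i)_{i∈A} is subsymmetric: one can choose a strictly increasing enumeration n_0 < n_1 < … of elements of B with π(n_0) < π(n_1) < π(n_2) < …, and the corresponding subsequence is subsymmetric. -/
open Filter

/-- The series `∑ u_i` converges (in norm). -/
def SeriesConv {E : Type*} [NormedAddCommGroup E] (u : ℕ → E) : Prop :=
  ∃ x : E, Tendsto (fun m => ∑ i ∈ Finset.range m, u i) atTop (nhds x)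

/-- Two sequences are equivalent if the same series of coefficients converge. -/
def Equiv' {E F : Type*} [NormedAddCommGroup E] [NormedSpace ℝ E]
    [NormedAddCommGroup F] [NormedSpace ℝ F] (u : ℕ → E) (v : ℕ → F) : Prop :=
  ∀ a : ℕ → ℝ, SeriesConv (fun i => a i • u i) ↔ SeriesConv (fun i => a i • v i)

/-- A sequence is subsymmetric if it is equivalent to all of its subsequences. -/
def Subsymmetric {E : Type*} [NormedAddCommGroup E] [NormedSpace ℝ E]
    (u : ℕ → E) : Prop :=
  ∀ n : ℕ → ℕ, StrictMono n → Equiv' u (u ∘ n)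

/-! An injection `ℕ → ℕ` tends to infinity, so it is strictly increasing along a subsequence;
and any subsequence of a subsymmetric sequence is again subsymmetric, since two of its
subsequences are both equivalent to the whole sequence. -/

section

variable {E F G : Type*} [NormedAddCommGroup E] [NormedSpace ℝ E]
  [NormedAddCommGroup F] [NormedSpace ℝ F] [NormedAddCommGroup G] [NormedSpace ℝ G]

theorem Equiv'.symm {u : ℕ → E} {v : ℕ → F} (h : Equiv' u v) : Equiv' v u :=
  fun a => (h a).symm

theorem Equiv'.trans {u : ℕ → E} {v : ℕ → F} {w : ℕ → G} (huv : Equiv' u v)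
    (hvw : Equiv' v w) : Equiv' u w :=
  fun a => (huv a).trans (hvw a)

theorem Subsymmetric.comp {u : ℕ → E} (hu : Subsymmetric u) {k : ℕ → ℕ} (hk : StrictMono k) :
    Subsymmetric (u ∘ k) :=
  fun n hn => (hu k hk).symm.trans (hu (k ∘ n) (hk.comp hn))

end

theorem Function.Injective.exists_strictMono_comp_strictMono {f : ℕ → ℕ}
    (hf : Function.Injective f) : ∃ k : ℕ → ℕ, StrictMono k ∧ StrictMono (f ∘ k) :=
  strictMono_subseq_of_tendsto_atTop (Nat.cofinite_eq_atTop ▸ hf.tendsto_cofinite)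

theorem subsymmetric_subsequence_general {E : Type*} [NormedAddCommGroup E]
    [NormedSpace ℝ E] (e : ℕ → E)
    (f : ℕ → ℕ) (hf : Function.Injective f)
    (hsub : Subsymmetric (e ∘ f)) :
    ∃ k : ℕ → ℕ, StrictMono k ∧ StrictMono (f ∘ k) ∧ Subsymmetric (e ∘ f ∘ k) := by
  obtain ⟨k, hk, hfk⟩ := hf.exists_strictMono_comp_strictMono
  exact ⟨k, hk, hfk, hsub.comp hk⟩

/-- If `(e_i)_{i ∈ B}` (enumerated by the strictly increasing `b`) carries an
injection `f` into `B` such that `(e_{f(i)})` is subsymmetric, then one can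
choose `n_0 < n_1 < ⋯` with `f(n_0) < f(n_1) < ⋯` so that the corresponding
subsequence `(e_{f(n_i)})`, a subsequence of `(e_i)_{i ∈ B}`, is subsymmetric. -/
theorem subsymmetric_subsequence {E : Type*} [NormedAddCommGroup E]
    [NormedSpace ℝ E] (e : ℕ → E) (b : ℕ → ℕ) (hb : StrictMono b)
    (f : ℕ → ℕ) (hf : Function.Injective f) (hfB : Set.range f ⊆ Set.range b)
    (hsub : Subsymmetric (e ∘ f)) :
    ∃ k : ℕ → ℕ, StrictMono k ∧ StrictMono (f ∘ k) ∧ Subsymmetric (e ∘ f ∘ k) :=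
  subsymmetric_subsequence_general e f hf hsub
end
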